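/- Let A, B be positive definite n×n complex matrices and ν ∈ (0,1). Then for every nonnegative integer n₀, in the Loewner order, (A + B)/2 ≤ H_ν(A,B) + (A − 2 A♯B + B) − Σ_{k=0}^{n₀} r_k [ H_{m_k/2^k}(A,B) − 2 H_{(2m_k+1)/2^{k+1}}(A,B) + H_{(m_k+1)/2^k}(A,B) ], where A♯B = A♯_{1/2}B. -/

import Mathlib

open scoped ComplexOrder

/-- `r ν k`: the recursively defined coefficients, `r 0 = min {ν, 1-ν}`,
`r k = min {2 r (k-1), 1 - 2 r (k-1)}`. -/
noncomputable def r (ν : ℝ) : ℕ → ℝ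
  | 0 => min ν (1 - ν)
  | k + 1 => min (2 * r ν k) (1 - 2 * r ν k)

/-- `m ν k = ⌊2^k ν⌋`, as a real number. -/
noncomputable def m (ν : ℝ) (k : ℕ) : ℝ := ⌊2 ^ k * ν⌋

variable {d : ℕ}

/-- Real power of a matrix via the functional calculus: for a Hermitian matrix with spectral
decomposition `A = U diag(λᵢ) U*`, `mpow A t = U diag(λᵢ^t) U*` (real powers `Real.rpow` of the
eigenvalues); junk value `A` for non-Hermitian `A`. -/
noncomputable def mpow (A : Matrix (Fin d) (Fin d) ℂ) (t : ℝ) : Matrix (Fin d) (Fin d) ℂ :=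
  if hA : A.IsHermitian then
    (hA.eigenvectorUnitary : Matrix (Fin d) (Fin d) ℂ) *
      Matrix.diagonal (fun i => ((hA.eigenvalues i ^ t : ℝ) : ℂ)) *
      star (hA.eigenvectorUnitary : Matrix (Fin d) (Fin d) ℂ)
  else A

/-- The μ-weighted geometric mean `A♯_μ B = A^{1/2} (A^{-1/2} B A^{-1/2})^μ A^{1/2}`. -/
noncomputable def sharp (A B : Matrix (Fin d) (Fin d) ℂ) (μ : ℝ) : Matrix (Fin d) (Fin d) ℂ :=
  mpow A (1 / 2) * mpow (mpow A (-(1 / 2)) * B * mpow A (-(1 / 2))) μ * mpow A (1 / 2)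

/-- The Heinz mean `H_μ(A,B) = (A♯_μ B + A♯_{1-μ} B)/2`. -/
noncomputable def heinz (A B : Matrix (Fin d) (Fin d) ℂ) (μ : ℝ) : Matrix (Fin d) (Fin d) ℂ :=
  ((1 : ℝ) / 2) • (sharp A B μ + sharp A B (1 - μ))

/-!
Write `S = A ^ (1/2)` and `C = A ^ (-1/2) * B * A ^ (-1/2)`. Then `A = S * S`, `B = S * C * S` and
`A ♯_μ B = S * C ^ μ * S`, so every term of the inequality is `S * g(C) * S` for a scalar
function `g`, and it suffices to prove the scalar inequality at each eigenvalue `x > 0` of `C`.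
There it concerns the convex function `μ ↦ (x ^ μ + x ^ (1 - μ)) / 2`.

For a convex `f` on `[0, 1]`, consider the chord of `f` over the dyadic interval
`[m_k / 2^k, (m_k + 1) / 2^k]` containing `ν`. Passing to the half that contains `ν` lowers
the chord at `ν` by exactly `r_k` times the second difference of `f` over the interval, since
`r_k` is the distance from `2^k ν` to the nearest integer. Telescoping, the weighted second
differences sum to at most the chord gap `(1 - ν) f 0 + ν f 1 - f ν` over `[0, 1]`, and
`√x ≤ (x ^ ν + x ^ (1 - ν)) / 2` finishes the proof.
-/

open scoped MatrixOrder

section Fract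

variable {α : Type*} [Field α] [LinearOrder α] [IsStrictOrderedRing α] [FloorRing α] {y : α}

theorem Int.fract_two_mul_of_lt_half (h : Int.fract y < 1 / 2) :
    Int.fract (2 * y) = 2 * Int.fract y := by
  refine Int.fract_eq_iff.mpr ⟨by linarith [Int.fract_nonneg y], by linarith, 2 * ⌊y⌋, ?_⟩
  rw [← Int.self_sub_floor]
  push_cast
  ring

theorem Int.fract_two_mul_of_half_le (h : 1 / 2 ≤ Int.fract y) :
    Int.fract (2 * y) = 2 * Int.fract y - 1 := by
  refine Int.fract_eq_iff.mpr ⟨by linarith, by linarith [Int.fract_lt_one y], 2 * ⌊y⌋ + 1, ?_⟩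
  rw [← Int.self_sub_floor]
  push_cast
  ring

end Fract

noncomputable def chordGap (f : ℝ → ℝ) (a b x : ℝ) : ℝ :=
  ((b - x) * f a + (x - a) * f b) / (b - a) - f x

section ChordGap

variable {f : ℝ → ℝ} {a b x : ℝ}

lemma ConvexOn.chordGap_nonneg {s : Set ℝ} (hf : ConvexOn ℝ s f) (ha : a ∈ s) (hb : b ∈ s)
    (hab : a < b) (hx : x ∈ Set.Icc a b) : 0 ≤ chordGap f a b x := by
  have hba : 0 < b - a := sub_pos.mpr hab
  have hcomb := hf.2 ha hb (div_nonneg (sub_nonneg.mpr hx.2) hba.le)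
    (div_nonneg (sub_nonneg.mpr hx.1) hba.le) (by field_simp; ring)
  have hpt : ((b - x) / (b - a)) • a + ((x - a) / (b - a)) • b = x := by
    simp only [smul_eq_mul]; field_simp; ring
  rw [hpt, smul_eq_mul, smul_eq_mul] at hcomb
  rw [chordGap, sub_nonneg]
  exact hcomb.trans_eq (by ring)

lemma chordGap_eq_left_half (f : ℝ → ℝ) (hab : a ≠ b) :
    chordGap f a b x = (x - a) / (b - a) * (f a - 2 * f ((a + b) / 2) + f b) +
      chordGap f a ((a + b) / 2) x := by
  have hba : b - a ≠ 0 := sub_ne_zero.mpr hab.symm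
  simp only [chordGap]
  rw [show (a + b) / 2 - a = (b - a) / 2 by ring]
  generalize f ((a + b) / 2) = fp
  field_simp
  ring

lemma chordGap_eq_right_half (f : ℝ → ℝ) (hab : a ≠ b) :
    chordGap f a b x = (b - x) / (b - a) * (f a - 2 * f ((a + b) / 2) + f b) +
      chordGap f ((a + b) / 2) b x := by
  have hba : b - a ≠ 0 := sub_ne_zero.mpr hab.symm
  simp only [chordGap]
  rw [show b - (a + b) / 2 = (b - a) / 2 by ring]
  generalize f ((a + b) / 2) = fp
  field_simp
  ring

end ChordGap

section Dyadic

variable {ν : ℝ}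

lemma m_eq (k : ℕ) : m ν k = 2 ^ k * ν - Int.fract (2 ^ k * ν) := by
  rw [m, Int.self_sub_fract]

lemma m_zero (hν : ν ∈ Set.Ico 0 1) : m ν 0 = 0 := by
  simp [m, Int.floor_eq_zero_iff.mpr hν]

lemma m_succ_of_fract_lt_half {k : ℕ} (h : Int.fract (2 ^ k * ν) < 1 / 2) :
    m ν (k + 1) = 2 * m ν k := by
  rw [m_eq, m_eq, pow_succ', mul_assoc, Int.fract_two_mul_of_lt_half h]
  ring

lemma m_succ_of_half_le_fract {k : ℕ} (h : 1 / 2 ≤ Int.fract (2 ^ k * ν)) :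
    m ν (k + 1) = 2 * m ν k + 1 := by
  rw [m_eq, m_eq, pow_succ', mul_assoc, Int.fract_two_mul_of_half_le h]
  ring

lemma r_eq_min_fract (hν : ν ∈ Set.Ico 0 1) (k : ℕ) :
    r ν k = min (Int.fract (2 ^ k * ν)) (1 - Int.fract (2 ^ k * ν)) := by
  induction k with
  | zero => simp [r, Int.fract_eq_self.mpr hν]
  | succ k ih =>
    rw [r, ih, pow_succ', mul_assoc]
    set t := Int.fract (2 ^ k * ν)
    rcases lt_or_ge t (1 / 2) with h | h
    · rw [min_eq_left (show t ≤ 1 - t by linarith), Int.fract_two_mul_of_lt_half h]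
    · rw [min_eq_right (show 1 - t ≤ t by linarith), Int.fract_two_mul_of_half_le h, min_comm]
      congr 1 <;> ring

lemma m_div_pow_lt_m_add_one_div_pow (k : ℕ) : m ν k / 2 ^ k < (m ν k + 1) / 2 ^ k := by
  gcongr
  linarith

lemma dyadic_midpoint (k : ℕ) :
    (m ν k / 2 ^ k + (m ν k + 1) / 2 ^ k) / 2 = (2 * m ν k + 1) / 2 ^ (k + 1) := by
  rw [pow_succ]
  field_simp
  ring

lemma chordGap_dyadic_succ (hν : ν ∈ Set.Ico 0 1) (f : ℝ → ℝ) (k : ℕ) :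
    chordGap f (m ν k / 2 ^ k) ((m ν k + 1) / 2 ^ k) ν =
      r ν k * (f (m ν k / 2 ^ k) - 2 * f ((2 * m ν k + 1) / 2 ^ (k + 1)) +
        f ((m ν k + 1) / 2 ^ k)) +
      chordGap f (m ν (k + 1) / 2 ^ (k + 1)) ((m ν (k + 1) + 1) / 2 ^ (k + 1)) ν := by
  have hne := (m_div_pow_lt_m_add_one_div_pow (ν := ν) k).ne
  have hpow : (2 : ℝ) ^ (k + 1) = 2 * 2 ^ k := pow_succ' 2 k
  rw [r_eq_min_fract hν]
  rcases lt_or_ge (Int.fract (2 ^ k * ν)) (1 / 2) with h | h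
  · have hleft : 2 * m ν k / 2 ^ (k + 1) = m ν k / 2 ^ k := by
      rw [hpow]
      field_simp
    have hpos : (ν - m ν k / 2 ^ k) / ((m ν k + 1) / 2 ^ k - m ν k / 2 ^ k) =
        Int.fract (2 ^ k * ν) := by
      rw [m_eq]
      field_simp
      ring
    rw [chordGap_eq_left_half f hne, dyadic_midpoint, hpos,
      min_eq_left (by linarith), m_succ_of_fract_lt_half h, hleft]
  · have hright : (2 * m ν k + 1 + 1) / 2 ^ (k + 1) = (m ν k + 1) / 2 ^ k := by
      rw [hpow]
      field_simp
      ring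
    have hpos : ((m ν k + 1) / 2 ^ k - ν) / ((m ν k + 1) / 2 ^ k - m ν k / 2 ^ k) =
        1 - Int.fract (2 ^ k * ν) := by
      rw [m_eq]
      field_simp
      ring
    rw [chordGap_eq_right_half f hne, dyadic_midpoint, hpos, min_eq_right (by linarith),
      m_succ_of_half_le_fract h, hright]

lemma sum_r_mul_secondDiff_eq (hν : ν ∈ Set.Ico 0 1) (f : ℝ → ℝ) (N : ℕ) :
    ∑ k ∈ Finset.range N, r ν k * (f (m ν k / 2 ^ k) - 2 * f ((2 * m ν k + 1) / 2 ^ (k + 1)) +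
        f ((m ν k + 1) / 2 ^ k)) =
      chordGap f 0 1 ν - chordGap f (m ν N / 2 ^ N) ((m ν N + 1) / 2 ^ N) ν := by
  set G : ℕ → ℝ := fun k => chordGap f (m ν k / 2 ^ k) ((m ν k + 1) / 2 ^ k) ν
  calc _ = ∑ k ∈ Finset.range N, (G k - G (k + 1)) :=
        Finset.sum_congr rfl fun k _ => by dsimp only [G]; rw [chordGap_dyadic_succ hν f k]; ring
    _ = G 0 - G N := Finset.sum_range_sub' G N
    _ = _ := by simp [G, m_zero hν]

lemma m_div_pow_nonneg (hν : 0 ≤ ν) (k : ℕ) : 0 ≤ m ν k / 2 ^ k := by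
  have : 0 ≤ m ν k := by rw [m]; exact_mod_cast Int.floor_nonneg.mpr (by positivity)
  positivity

lemma m_add_one_div_pow_le_one (hν : ν < 1) (k : ℕ) : (m ν k + 1) / 2 ^ k ≤ 1 := by
  rw [div_le_one (by positivity), m]
  have : ⌊(2 : ℝ) ^ k * ν⌋ < 2 ^ k :=
    Int.floor_lt.mpr (by push_cast; nlinarith [pow_pos (two_pos : (0 : ℝ) < 2) k])
  exact_mod_cast this

lemma mem_dyadic_Icc (k : ℕ) : ν ∈ Set.Icc (m ν k / 2 ^ k) ((m ν k + 1) / 2 ^ k) := by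
  rw [m_eq]
  constructor
  · rw [div_le_iff₀ (by positivity)]
    linarith [Int.fract_nonneg (2 ^ k * ν)]
  · rw [le_div_iff₀ (by positivity)]
    linarith [Int.fract_lt_one (2 ^ k * ν)]

theorem ConvexOn.sum_r_mul_secondDiff_le {f : ℝ → ℝ} (hf : ConvexOn ℝ (Set.Icc 0 1) f)
    (hν : ν ∈ Set.Ico 0 1) (N : ℕ) :
    ∑ k ∈ Finset.range N, r ν k * (f (m ν k / 2 ^ k) - 2 * f ((2 * m ν k + 1) / 2 ^ (k + 1)) +
        f ((m ν k + 1) / 2 ^ k)) ≤ (1 - ν) * f 0 + ν * f 1 - f ν := by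
  have hlt := m_div_pow_lt_m_add_one_div_pow (ν := ν) N
  have ha : m ν N / 2 ^ N ∈ Set.Icc (0 : ℝ) 1 :=
    ⟨m_div_pow_nonneg hν.1 N, hlt.le.trans (m_add_one_div_pow_le_one hν.2 N)⟩
  have hb : (m ν N + 1) / 2 ^ N ∈ Set.Icc (0 : ℝ) 1 :=
    ⟨(m_div_pow_nonneg hν.1 N).trans hlt.le, m_add_one_div_pow_le_one hν.2 N⟩
  have hgap := hf.chordGap_nonneg ha hb hlt (mem_dyadic_Icc N)
  rw [sum_r_mul_secondDiff_eq hν]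
  simp only [chordGap] at hgap ⊢
  linarith

end Dyadic

/-- The scalar Heinz mean `H_μ(1, x)`. -/
noncomputable def scalarHeinz (x μ : ℝ) : ℝ := (x ^ μ + x ^ (1 - μ)) / 2

section ScalarHeinz

variable {x : ℝ}

lemma convexOn_scalarHeinz (hx : 0 < x) : ConvexOn ℝ Set.univ (scalarHeinz x) := by
  have hrefl : ConvexOn ℝ Set.univ fun μ : ℝ => x ^ (1 - μ) := by
    simpa [Function.comp_def, AffineMap.lineMap_apply, neg_add_eq_sub] using
      (convexOn_rpow_left hx).comp_affineMap (AffineMap.lineMap (1 : ℝ) 0)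
  refine (((convexOn_rpow_left hx).add hrefl).smul (by norm_num : (0 : ℝ) ≤ 1 / 2)).congr ?_
  intro μ _
  simp only [scalarHeinz, Pi.add_apply, smul_eq_mul]
  ring

lemma scalarHeinz_zero (x : ℝ) : scalarHeinz x 0 = (1 + x) / 2 := by
  simp [scalarHeinz]

lemma scalarHeinz_one (x : ℝ) : scalarHeinz x 1 = (1 + x) / 2 := by
  simp [scalarHeinz, add_comm]

lemma rpow_half_le_scalarHeinz (hx : 0 ≤ x) (μ : ℝ) : x ^ (1 / 2 : ℝ) ≤ scalarHeinz x μ := by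
  have amgm := Real.geom_mean_le_arith_mean2_weighted (w₁ := 1 / 2) (w₂ := 1 / 2)
    (by norm_num) (by norm_num) (Real.rpow_nonneg hx μ) (Real.rpow_nonneg hx (1 - μ)) (by norm_num)
  rw [← Real.rpow_mul hx, ← Real.rpow_mul hx, ← Real.rpow_add' hx (by ring_nf; norm_num)] at amgm
  rw [scalarHeinz]
  convert amgm using 2 <;> ring

theorem scalarHeinz_refinement {ν : ℝ} (hν : ν ∈ Set.Ico 0 1) (hx : 0 < x) (N : ℕ) :
    ∑ k ∈ Finset.range N, r ν k * (scalarHeinz x (m ν k / 2 ^ k) -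
        2 * scalarHeinz x ((2 * m ν k + 1) / 2 ^ (k + 1)) + scalarHeinz x ((m ν k + 1) / 2 ^ k)) ≤
      scalarHeinz x ν + (1 - 2 * x ^ (1 / 2 : ℝ) + x) - (1 + x) / 2 := by
  have hsum := ((convexOn_scalarHeinz hx).subset (Set.subset_univ _) (convex_Icc 0 1)
    ).sum_r_mul_secondDiff_le hν N
  rw [scalarHeinz_zero, scalarHeinz_one] at hsum
  linarith [rpow_half_le_scalarHeinz hx.le ν]

end ScalarHeinz

namespace Matrix

variable {n 𝕜 : Type*} [Fintype n] [DecidableEq n] [RCLike 𝕜]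

/-- `f ↦ S * cfc f C * S`; it is linear because every function is continuous on the finite
spectrum of a matrix. -/
noncomputable def cfcConj (S C : Matrix n n 𝕜) : (ℝ → ℝ) →ₗ[ℝ] Matrix n n 𝕜 where
  toFun f := S * cfc f C * S
  map_add' f g := by
    rw [Pi.add_def, cfc_add C f g (C.finite_real_spectrum.continuousOn f)
      (C.finite_real_spectrum.continuousOn g), mul_add, add_mul]
  map_smul' c f := by
    rw [Pi.smul_def, cfc_smul c f C (C.finite_real_spectrum.continuousOn f), RingHom.id_apply,
      mul_smul_comm, smul_mul_assoc]

lemma cfcConj_posSemidef {S C : Matrix n n 𝕜} (hS : S.IsHermitian) {g : ℝ → ℝ}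
    (hg : ∀ x ∈ spectrum ℝ C, 0 ≤ g x) : (cfcConj S C g).PosSemidef := by
  have := (nonneg_iff_posSemidef.mp (cfc_nonneg hg)).mul_mul_conjTranspose_same S
  rwa [hS.eq] at this

end Matrix

section Mpow

open Matrix

variable {A : Matrix (Fin d) (Fin d) ℂ}

lemma mpow_eq_cfc (hA : A.IsHermitian) (t : ℝ) : mpow A t = cfc (fun x : ℝ => x ^ t) A := by
  rw [mpow, dif_pos hA, hA.cfc_eq, IsHermitian.cfc, Unitary.conjStarAlgAut_apply]
  rfl

lemma isHermitian_mpow (hA : A.IsHermitian) (t : ℝ) : (mpow A t).IsHermitian := by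
  rw [mpow_eq_cfc hA]
  exact IsSelfAdjoint.isHermitian (cfc_predicate _ A)

lemma mpow_mul_mpow (hA : A.PosDef) (s t : ℝ) : mpow A s * mpow A t = mpow A (s + t) := by
  rw [mpow_eq_cfc hA.1, mpow_eq_cfc hA.1, mpow_eq_cfc hA.1,
    ← cfc_mul _ _ A (A.finite_real_spectrum.continuousOn _) (A.finite_real_spectrum.continuousOn _)]
  exact cfc_congr fun x hx => (Real.rpow_add (hA.isStrictlyPositive.spectrum_pos hx) s t).symm

lemma mpow_zero (hA : A.IsHermitian) : mpow A 0 = 1 := by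
  simpa [mpow_eq_cfc hA] using cfc_const_one ℝ A hA.isSelfAdjoint

lemma mpow_one (hA : A.IsHermitian) : mpow A 1 = A := by
  simpa [mpow_eq_cfc hA] using cfc_id' ℝ A hA.isSelfAdjoint

end Mpow

open Matrix in
theorem exists_cfcConj_of_posDef {A B : Matrix (Fin d) (Fin d) ℂ} (hA : A.PosDef) (hB : B.PosDef) :
    ∃ S C : Matrix (Fin d) (Fin d) ℂ, S.IsHermitian ∧ C.PosDef ∧ A = cfcConj S C 1 ∧
      B = cfcConj S C id ∧ ∀ μ, sharp A B μ = cfcConj S C (fun x => x ^ μ) := by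
  set S := mpow A (1 / 2)
  set T := mpow A (-(1 / 2))
  have hT : T.IsHermitian := isHermitian_mpow hA.1 _
  have hST : S * T = 1 := by rw [mpow_mul_mpow hA]; norm_num [mpow_zero hA.1]
  have hTS : T * S = 1 := by rw [mpow_mul_mpow hA]; norm_num [mpow_zero hA.1]
  have hC : (T * B * T).PosDef := by
    have hinj : Function.Injective T.mulVec := fun v w h => by
      simpa [mulVec_mulVec, hST] using congrArg (S *ᵥ ·) h
    simpa [hT.eq] using hB.conjTranspose_mul_mul_same hinj
  refine ⟨S, T * B * T, isHermitian_mpow hA.1 _, hC, ?_, ?_, fun μ => ?_⟩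
  · change A = S * cfc 1 _ * S
    rw [cfc_one ℝ _ hC.1.isSelfAdjoint, mul_one, mpow_mul_mpow hA]
    norm_num [mpow_one hA.1]
  · change B = S * cfc id _ * S
    rw [cfc_id ℝ _ hC.1.isSelfAdjoint, ← mul_assoc, ← mul_assoc, hST, one_mul, mul_assoc, hTS,
      mul_one]
  · rw [sharp, mpow_eq_cfc hC.1]
    rfl

open Matrix in
theorem stmt15 (A B : Matrix (Fin d) (Fin d) ℂ) (hA : A.PosDef) (hB : B.PosDef)
    (ν : ℝ) (hν : ν ∈ Set.Ioo (0 : ℝ) 1) (n₀ : ℕ) :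
    (heinz A B ν + (A - (2 : ℝ) • sharp A B (1 / 2) + B) -
      (∑ k ∈ Finset.range (n₀ + 1), r ν k •
        (heinz A B (m ν k / 2 ^ k) - (2 : ℝ) • heinz A B ((2 * m ν k + 1) / 2 ^ (k + 1)) +
          heinz A B ((m ν k + 1) / 2 ^ k))) -
      ((1 : ℝ) / 2) • (A + B)).PosSemidef := by
  obtain ⟨S, C, hS, hC, hAS, hBS, hsharp⟩ := exists_cfcConj_of_posDef hA hB
  have hheinz : ∀ μ, heinz A B μ = cfcConj S C (fun x => scalarHeinz x μ) := fun μ => by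
    rw [heinz, hsharp, hsharp, ← map_add, ← map_smul]
    congr 1
    ext x
    simp only [Pi.smul_apply, Pi.add_apply, smul_eq_mul, scalarHeinz]
    ring
  simp only [hheinz, hsharp]
  rw [hAS, hBS]
  simp only [← map_add, ← map_sub, ← map_smul, ← map_sum]
  refine cfcConj_posSemidef hS fun x hx => ?_
  have hbound := scalarHeinz_refinement (Set.Ioo_subset_Ico_self hν)
    (hC.isStrictlyPositive.spectrum_pos hx) (n₀ + 1)
  simp only [Pi.add_apply, Pi.sub_apply, Pi.smul_apply, Finset.sum_apply, Pi.one_apply, id_eq,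
    smul_eq_mul]
  linarith
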